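/- arXiv:1609.08219 — 2 statements merged into one kernel-verified Lean document; each statement's English description precedes it below -/
import Mathlib

section
/- Let (X, T) be a dynamical system with G a locally compact abelian group acting continuously on the compact space X, let f ∈ C(X) and ω ∈ X with dense orbit {T^t ω : t ∈ G} in X, and define g : G → ℂ by g(t) = f(T^t ω). If g is weakly almost periodic on G, then f ∈ WAP(X). -/
open Filter Topology BoundedContinuousFunction

variable {G X : Type*}

/-- The translate `T^s h` of a bounded continuous function, `(T^s h)(x) = h(x - s)`. -/
noncomputable def bcfTranslate [UniformSpace G] [AddCommGroup G] [IsUniformAddGroup G]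
    (h : G →ᵇ ℂ) (s : G) : G →ᵇ ℂ :=
  h.compContinuous ⟨fun x => x - s, by continuity⟩

/-- A function `h : G → ℂ` is weakly almost periodic: it is bounded and uniformly
continuous, and its orbit under translations is relatively compact in the weak topology
of the Banach space `C_u(G) ⊆ (G →ᵇ ℂ)` with sup norm. -/
def IsWapFn [UniformSpace G] [AddCommGroup G] [IsUniformAddGroup G] (h : G → ℂ) : Prop :=
  UniformContinuous h ∧ ∃ hb : G →ᵇ ℂ, (∀ x, hb x = h x) ∧
    IsCompact (closure (toWeakSpace ℂ (G →ᵇ ℂ) ''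
      {g : G →ᵇ ℂ | ∃ s : G, g = bcfTranslate hb s}))

/-- A continuous function on compact `X` is weakly almost periodic for the `G`-action if
its orbit under translations is relatively compact in the weak topology of `C(X, ℂ)`. -/
def IsWapCX [AddGroup G] [TopologicalSpace G] [TopologicalSpace X] [CompactSpace X]
    [AddAction G X] [ContinuousVAdd G X] (f : C(X, ℂ)) : Prop :=
  IsCompact (closure (toWeakSpace ℂ C(X, ℂ) ''
    {h : C(X, ℂ) | ∃ t : G, h = f.comp ⟨fun x => t +ᵥ x, continuous_const_vadd t⟩}))

/-! Restricting to the dense orbit, `h ↦ (t ↦ h (t +ᵥ ω))`, is a linear isometry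
`C(X) → C_u(G)` sending `f` to `g` and the translate `f ∘ T^t` to the translate of `g` by `-t`.
By Hahn–Banach every functional on `C(X)` factors through this isometry, so it is an embedding
for the weak topologies; its range is norm-closed and convex, hence weakly closed. Relative weak
compactness of the orbit of `g` therefore pulls back to the orbit of `f`. -/

open Set

theorem Topology.IsInducing.isCompact_closure_of_mapsTo {α β : Type*} [TopologicalSpace α]
    [TopologicalSpace β] {f : α → β} (hf : IsInducing f) (hrange : IsClosed (range f))
    {s : Set α} {t : Set β} (hst : MapsTo f s t) (ht : IsCompact (closure t)) :
    IsCompact (closure s) :=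
  (hf.isCompact_preimage hrange ht).of_isClosed_subset isClosed_closure
    (closure_minimal (fun _ hx => subset_closure (hst hx))
      (isClosed_closure.preimage hf.continuous))

namespace BoundedContinuousFunction

variable {α β δ : Type*} [TopologicalSpace α] [TopologicalSpace δ]

theorem norm_compContinuous_of_denseRange [SeminormedAddCommGroup β] (f : α →ᵇ β)
    {g : C(δ, α)} (hg : DenseRange g) : ‖f.compContinuous g‖ = ‖f‖ := by
  refine le_antisymm ((norm_le (norm_nonneg f)).2 fun y => f.norm_coe_le_norm (g y))
    ((norm_le (norm_nonneg _)).2 fun x => ?_)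
  exact hg.induction_on x (isClosed_le (by fun_prop) continuous_const)
    (f.compContinuous g).norm_coe_le_norm

variable (𝕜) in
noncomputable def compContinuousₗᵢ [NormedField 𝕜] [SeminormedAddCommGroup β] [NormedSpace 𝕜 β]
    (g : C(δ, α)) (hg : DenseRange g) : (α →ᵇ β) →ₗᵢ[𝕜] δ →ᵇ β where
  toFun f := f.compContinuous g
  map_add' _ _ := rfl
  map_smul' _ _ := rfl
  norm_map' f := f.norm_compContinuous_of_denseRange hg

end BoundedContinuousFunction

namespace LinearIsometry

variable {𝕜 E F : Type*} [RCLike 𝕜] [NormedAddCommGroup E] [NormedSpace 𝕜 E]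
  [NormedAddCommGroup F] [NormedSpace 𝕜 F]

theorem exists_dual_comp_eq (R : E →ₗᵢ[𝕜] F) (ψ : StrongDual 𝕜 E) :
    ∃ φ : StrongDual 𝕜 F, φ ∘L R.toContinuousLinearMap = ψ := by
  obtain ⟨φ, hφ, -⟩ := exists_extension_norm_eq _
    (ψ ∘L (R.equivRange.symm.toContinuousLinearEquiv : R.range →L[𝕜] E))
  exact ⟨φ, ContinuousLinearMap.ext fun x => by simpa using hφ (R.equivRange x)⟩

theorem isInducing_weakSpaceMap (R : E →ₗᵢ[𝕜] F) :
    IsInducing (WeakSpace.map R.toContinuousLinearMap) := by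
  choose Φ hΦ using R.exists_dual_comp_eq
  have hevalE : IsInducing fun (x : WeakSpace 𝕜 E) (ψ : StrongDual 𝕜 E) => ψ x := ⟨rfl⟩
  have hrestrict : Continuous fun (v : StrongDual 𝕜 F → 𝕜) (ψ : StrongDual 𝕜 E) => v (Φ ψ) :=
    continuous_pi fun ψ => continuous_apply (Φ ψ)
  refine .of_comp (map_continuous _) (WeakBilin.coeFn_continuous _)
    (.of_comp ((WeakBilin.coeFn_continuous _).comp (map_continuous _)) hrestrict ?_)
  convert hevalE using 2 with x
  funext ψ
  exact congr($(hΦ ψ) x)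

theorem isClosed_range_weakSpaceMap [CompleteSpace E] [NormedSpace ℝ F] [IsScalarTower ℝ 𝕜 F]
    (R : E →ₗᵢ[𝕜] F) : IsClosed (range (WeakSpace.map R.toContinuousLinearMap)) := by
  have hconvex : Convex ℝ (range R) :=
    ((LinearMap.range R.toLinearMap).restrictScalars ℝ).convex
  have hclosed : IsClosed (range R) := R.isometry.isClosedEmbedding.isClosed_range
  have h := hconvex.toWeakSpace_closure 𝕜
  rw [hclosed.closure_eq, ← range_comp] at h
  exact closure_eq_iff_isClosed.mp h.symm

theorem isCompact_closure_toWeakSpace_of_mapsTo [CompleteSpace E] [NormedSpace ℝ F]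
    [IsScalarTower ℝ 𝕜 F] (R : E →ₗᵢ[𝕜] F) {s : Set E} {t : Set F} (hst : MapsTo R s t)
    (ht : IsCompact (closure (toWeakSpace 𝕜 F '' t))) :
    IsCompact (closure (toWeakSpace 𝕜 E '' s)) :=
  R.isInducing_weakSpaceMap.isCompact_closure_of_mapsTo R.isClosed_range_weakSpaceMap
    (fun _ ⟨x, hx, hxy⟩ => hxy ▸ ⟨R x, hst hx, rfl⟩) ht

end LinearIsometry

theorem isWapCX_of_orbitMap_isWapFn_general [UniformSpace G] [AddCommGroup G] [IsUniformAddGroup G]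
    [TopologicalSpace X] [CompactSpace X]
    [AddAction G X] [ContinuousVAdd G X]
    (f : C(X, ℂ)) (ω : X) (hdense : Dense {x : X | ∃ t : G, x = t +ᵥ ω})
    (hg : IsWapFn fun t : G => f (t +ᵥ ω)) :
    IsWapCX (G := G) f := by
  obtain ⟨-, gb, hgb, hcompact⟩ := hg
  let orbit : C(G, X) := ⟨(· +ᵥ ω), by fun_prop⟩
  have horbit : DenseRange orbit :=
    hdense.mono <| by rintro - ⟨t, rfl⟩; exact ⟨t, rfl⟩
  let R := (BoundedContinuousFunction.compContinuousₗᵢ ℂ orbit horbit).comp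
    (ContinuousMap.linearIsometryBoundedOfCompact X ℂ ℂ).toLinearIsometry
  refine R.isCompact_closure_toWeakSpace_of_mapsTo ?_ hcompact
  rintro - ⟨t, rfl⟩
  refine ⟨-t, BoundedContinuousFunction.ext fun s => ?_⟩
  show f (t +ᵥ (s +ᵥ ω)) = gb (s - -t)
  rw [hgb, sub_neg_eq_add, add_comm, ← add_vadd]

/-- If `G` is an LCA group acting continuously on the compact space `X`,
`ω ∈ X` has dense orbit, `f ∈ C(X)` and `g(t) = f(T^t ω)` is weakly almost periodic on
`G`, then `f ∈ WAP(X)`. -/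
theorem isWapCX_of_orbitMap_isWapFn [UniformSpace G] [AddCommGroup G] [IsUniformAddGroup G]
    [LocallyCompactSpace G] [TopologicalSpace X] [CompactSpace X]
    [AddAction G X] [ContinuousVAdd G X]
    (f : C(X, ℂ)) (ω : X) (hdense : Dense {x : X | ∃ t : G, x = t +ᵥ ω})
    (hg : IsWapFn fun t : G => f (t +ᵥ ω)) :
    IsWapCX (G := G) f :=
  isWapCX_of_orbitMap_isWapFn_general f ω hdense hg
end

section
/- Let G be a locally compact abelian group and μ a null weakly almost periodic measure on G. Then every element of the hull X(μ) (vague orbit closure of μ) is a null weakly almost periodic measure. -/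
open Filter Topology MeasureTheory BoundedContinuousFunction
open scoped Pointwise

variable {G : Type*}

/-- Continuous compactly supported test functions. -/
def IsCc [TopologicalSpace G] (c : G → ℂ) : Prop := Continuous c ∧ HasCompactSupport c

/-- A Bohr (strongly) almost periodic function on `G`: bounded, uniformly continuous,
with norm-relatively compact translation orbit. -/
def IsSapFn [UniformSpace G] [AddCommGroup G] [IsUniformAddGroup G] (h : G → ℂ) : Prop :=
  UniformContinuous h ∧ ∃ hb : G →ᵇ ℂ, (∀ x, hb x = h x) ∧
    IsCompact (closure {g : G →ᵇ ℂ | ∃ s : G, g = bcfTranslate hb s})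

/-- A Følner sequence for the Haar measure `θ`. -/
def IsFolner [TopologicalSpace G] [AddCommGroup G] [MeasurableSpace G]
    (θ : Measure G) (A : ℕ → Set G) : Prop :=
  (∀ n, IsCompact (A n)) ∧
    ∀ x : G, Tendsto (fun n => θ (symmDiff (A n) ((fun t => x + t) '' A n)) / θ (A n))
      atTop (𝓝 0)

/-- `m` is the mean of `h`: for every Følner sequence `Aₙ`,
`(1/θ(Aₙ)) ∫_{x+Aₙ} h → m` uniformly in `x`. -/
def IsMeanFn [TopologicalSpace G] [AddCommGroup G] [MeasurableSpace G]
    (θ : Measure G) (h : G → ℂ) (m : ℂ) : Prop :=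
  ∀ A : ℕ → Set G, IsFolner θ A →
    TendstoUniformly
      (fun n x => ((θ (A n)).toReal)⁻¹ • ∫ t in (fun s => x + s) '' A n, h t ∂θ)
      (fun _ => m) atTop

/-- A measure, viewed as a functional on test functions. -/
abbrev MeasF (G : Type*) := (G → ℂ) → ℂ

/-- The convolution `(c ∗ μ)(x) = ∫ c(x - t) dμ(t)` of a test function with a measure. -/
def convF [AddCommGroup G] (c : G → ℂ) (μ : MeasF G) : G → ℂ := fun x => μ fun t => c (x - t)

/-- `μ` is a (complex Radon) measure: a linear functional on `C_c(G)` which is continuous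
in the inductive limit topology (bounded on each `C(G:K)`). -/
def IsRadonF [TopologicalSpace G] (μ : MeasF G) : Prop :=
  (∀ f g : G → ℂ, IsCc f → IsCc g → μ (f + g) = μ f + μ g) ∧
  (∀ (a : ℂ) (f : G → ℂ), IsCc f → μ (a • f) = a * μ f) ∧
  (∀ K : Set G, IsCompact K → ∃ C : ℝ, ∀ f : G → ℂ, Continuous f → tsupport f ⊆ K →
    ‖μ f‖ ≤ C * ⨆ x, ‖f x‖)

/-- `μ` is a translation bounded measure: a Radon measure with `c ∗ μ ∈ C_u(G)`
(bounded and uniformly continuous) for every test function `c`. -/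
def IsTbF [UniformSpace G] [AddCommGroup G] [IsUniformAddGroup G] (μ : MeasF G) : Prop :=
  IsRadonF μ ∧ ∀ c : G → ℂ, IsCc c →
    UniformContinuous (convF c μ) ∧ ∃ C : ℝ, ∀ x, ‖convF c μ x‖ ≤ C

/-- A weakly almost periodic measure: `c ∗ μ ∈ WAP(G)` for all test functions `c`. -/
def IsWapM [UniformSpace G] [AddCommGroup G] [IsUniformAddGroup G] (μ : MeasF G) : Prop :=
  IsTbF μ ∧ ∀ c : G → ℂ, IsCc c → IsWapFn (convF c μ)

/-- A strongly almost periodic measure: `c ∗ μ` is Bohr almost periodic for all `c`. -/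
def IsSapM [UniformSpace G] [AddCommGroup G] [IsUniformAddGroup G] (μ : MeasF G) : Prop :=
  IsTbF μ ∧ ∀ c : G → ℂ, IsCc c → IsSapFn (convF c μ)

/-- A null weakly almost periodic measure: weakly almost periodic with
`M(|c ∗ μ|) = 0` for all test functions `c`. -/
def IsWap0M [UniformSpace G] [AddCommGroup G] [IsUniformAddGroup G] [MeasurableSpace G]
    (θ : Measure G) (μ : MeasF G) : Prop :=
  IsWapM μ ∧ ∀ c : G → ℂ, IsCc c →
    IsMeanFn θ (fun x => (‖convF c μ x‖ : ℂ)) 0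

/-- The translate `T^t μ = δ_t ∗ μ` of a measure. -/
def translateM [AddCommGroup G] (t : G) (μ : MeasF G) : MeasF G :=
  fun f => μ fun x => f (t + x)

/-- The vague topology on measures: the weak-* topology from `C_c(G)`. -/
noncomputable def vagueTop [TopologicalSpace G] : TopologicalSpace (MeasF G) :=
  TopologicalSpace.induced (fun μ => fun c : {c : G → ℂ // IsCc c} => μ c.1)
    inferInstance

/-- The hull `X(μ)`: the vague closure of the translation orbit of `μ`. -/
def hullM [TopologicalSpace G] [AddCommGroup G] (μ : MeasF G) : Set (MeasF G) :=
  @closure _ vagueTop {ν | ∃ t : G, ν = translateM t μ}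


/-! Every condition in `IsWap0M` is either closed in the vague topology and true on the
translation orbit of `μ`, or a property of `c ∗ ν`, which lies in the pointwise closure of the
translates of `c ∗ μ`. The Radon bounds of the translates of `μ` are uniform in the translation
by the Banach–Steinhaus theorem. Bounds and moduli of continuity pass to the pointwise closure;
on each compact set `c ∗ ν` is uniformly close to a translate of `c ∗ μ`, so its Følner means
are close to those of `c ∗ μ` at a shifted point, which converge uniformly. Finally, evaluation
maps the weakly compact orbit closure of `c ∗ μ` onto a compact, hence pointwise closed, set of
functions, which therefore contains the translates of `c ∗ ν`. -/

section TestFunctions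

variable [TopologicalSpace G]

theorem IsCc.add {f g : G → ℂ} (hf : IsCc f) (hg : IsCc g) : IsCc (f + g) :=
  ⟨hf.1.add hg.1, hf.2.add hg.2⟩

theorem IsCc.const_smul {f : G → ℂ} (hf : IsCc f) (a : ℂ) : IsCc (a • f) :=
  ⟨hf.1.const_smul a, hf.2.smul_left⟩

theorem IsCc.comp_homeomorph {f : G → ℂ} (hf : IsCc f) (e : G ≃ₜ G) : IsCc (f ∘ e) :=
  ⟨hf.1.comp e.continuous, hf.2.comp_homeomorph e⟩

def vanishingOutside (K : Set G) : Submodule ℂ (G →ᵇ ℂ) where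
  carrier := {f | ∀ x ∉ K, f x = 0}
  add_mem' hf hg x hx := by simp [hf x hx, hg x hx]
  zero_mem' _ _ := rfl
  smul_mem' a f hf x hx := by simp [hf x hx]

theorem mem_vanishingOutside {K : Set G} {f : G →ᵇ ℂ} :
    f ∈ vanishingOutside K ↔ ∀ x ∉ K, f x = 0 :=
  Iff.rfl

theorem isClosed_vanishingOutside (K : Set G) :
    IsClosed (vanishingOutside K : Set (G →ᵇ ℂ)) := by
  have : (vanishingOutside K : Set (G →ᵇ ℂ)) = ⋂ x ∈ Kᶜ, {f | f x = 0} := by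
    ext f
    simp [mem_vanishingOutside]
  rw [this]
  exact isClosed_biInter fun x _ => isClosed_eq (continuous_eval_const x) continuous_const

instance (K : Set G) : CompleteSpace (vanishingOutside K) :=
  (isClosed_vanishingOutside K).completeSpace_coe

theorem isCc_of_mem_vanishingOutside [R1Space G] {K : Set G} (hK : IsCompact K)
    {f : G →ᵇ ℂ} (hf : f ∈ vanishingOutside K) : IsCc ⇑f :=
  ⟨f.continuous, .intro hK hf⟩

end TestFunctions

section Radon

variable [TopologicalSpace G] [AddCommGroup G] [IsTopologicalAddGroup G] {μ : MeasF G}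

theorem IsRadonF.translateM (hμ : IsRadonF μ) (t : G) : IsRadonF (translateM t μ) := by
  refine ⟨fun f g hf hg => hμ.1 _ _ (hf.comp_homeomorph (.addLeft t))
      (hg.comp_homeomorph (.addLeft t)),
    fun a f hf => hμ.2.1 a _ (hf.comp_homeomorph (.addLeft t)), fun K hK => ?_⟩
  obtain ⟨C, hC⟩ := hμ.2.2 _ ((Homeomorph.addLeft t).isCompact_preimage.mpr hK)
  refine ⟨C, fun f hf hfK => ?_⟩
  have hsupp : tsupport (f ∘ Homeomorph.addLeft t) ⊆ Homeomorph.addLeft t ⁻¹' K := by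
    rw [tsupport_comp_eq_preimage]
    exact Set.preimage_mono hfK
  have hsup : ⨆ x, ‖f (t + x)‖ = ⨆ x, ‖f x‖ :=
    (Equiv.addLeft t).iSup_comp (g := fun x => ‖f x‖)
  exact hsup ▸ hC _ (hf.comp (continuous_const_add t)) hsupp

noncomputable def IsRadonF.toCLM (hμ : IsRadonF μ) {K : Set G} (hK : IsCompact K) :
    vanishingOutside K →L[ℂ] ℂ :=
  LinearMap.mkContinuousOfExistsBound
    { toFun := fun f => μ ⇑(f : G →ᵇ ℂ)
      map_add' := fun f g => hμ.1 _ _ (isCc_of_mem_vanishingOutside hK f.2)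
        (isCc_of_mem_vanishingOutside hK g.2)
      map_smul' := fun a f => hμ.2.1 a _ (isCc_of_mem_vanishingOutside hK f.2) } <| by
    obtain ⟨C, hC⟩ := hμ.2.2 _ hK.closure
    refine ⟨C, fun f => ?_⟩
    rw [← Submodule.norm_coe, BoundedContinuousFunction.norm_eq_iSup_norm]
    exact hC _ (f : G →ᵇ ℂ).continuous
      (closure_mono fun x hx => by_contra fun hxK => hx (f.2 x hxK))

end Radon

theorem IsTbF.exists_bound_translateM [UniformSpace G] [AddCommGroup G] [IsUniformAddGroup G]
    {μ : MeasF G} (hμ : IsTbF μ) {K : Set G} (hK : IsCompact K) :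
    ∃ C : ℝ, ∀ (t : G) (f : G → ℂ), Continuous f → tsupport f ⊆ K →
      ‖translateM t μ f‖ ≤ C * ⨆ x, ‖f x‖ := by
  have hpointwise :
      ∀ f : vanishingOutside K, ∃ C, ∀ t, ‖(hμ.1.translateM t).toCLM hK f‖ ≤ C := by
    intro f
    obtain ⟨C, hC⟩ := (hμ.2 _ ((isCc_of_mem_vanishingOutside hK f.2).comp_homeomorph
      (Homeomorph.neg G))).2
    refine ⟨C, fun t => ?_⟩
    convert hC (-t) using 2
    exact congrArg μ (funext fun s => by simp [add_comm])
  obtain ⟨C, hC⟩ := banach_steinhaus hpointwise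
  refine ⟨C, fun t f hf hfK => ?_⟩
  obtain ⟨B, hB⟩ :=
    hf.bounded_above_of_compact_support (hK.of_isClosed_subset (isClosed_tsupport f) hfK)
  let fK : vanishingOutside K := ⟨.ofNormedAddCommGroup f hf B hB,
    fun x hx => image_eq_zero_of_notMem_tsupport fun h => hx (hfK h)⟩
  calc ‖translateM t μ f‖ = ‖(hμ.1.translateM t).toCLM hK fK‖ := rfl
    _ ≤ ‖(hμ.1.translateM t).toCLM hK‖ * ‖fK‖ := ContinuousLinearMap.le_opNorm _ _
    _ ≤ C * ‖fK‖ := by gcongr; exact hC t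
    _ = C * ⨆ x, ‖f x‖ := by
        rw [← Submodule.norm_coe, BoundedContinuousFunction.norm_eq_iSup_norm]; rfl

section FnHull

variable [AddCommGroup G] {β : Type*} [TopologicalSpace β]

def fnHull (h : G → β) : Set (G → β) :=
  closure (Set.range fun t x => h (x - t))

theorem fnHull_subset_of_isClosed {h : G → β} {P : Set (G → β)} (hP : IsClosed P)
    (hhP : ∀ t, (fun x => h (x - t)) ∈ P) : fnHull h ⊆ P :=
  closure_minimal (Set.range_subset_iff.mpr hhP) hP

theorem comp_mem_fnHull {γ : Type*} [TopologicalSpace γ] {φ : β → γ} (hφ : Continuous φ)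
    {h k : G → β} (hk : k ∈ fnHull h) : (fun x => φ (k x)) ∈ fnHull fun x => φ (h x) :=
  map_mem_closure (continuous_pi fun x => hφ.comp (continuous_apply x)) hk
    (by rintro _ ⟨t, rfl⟩; exact ⟨t, rfl⟩)

theorem sub_mem_fnHull {h k : G → β} (hk : k ∈ fnHull h) (s : G) :
    (fun x => k (x - s)) ∈ fnHull h :=
  map_mem_closure (continuous_pi fun x => continuous_apply (x - s)) hk
    (by rintro _ ⟨t, rfl⟩; exact ⟨t + s, funext fun x => by simp [sub_sub, add_comm]⟩)

theorem norm_le_of_mem_fnHull {E : Type*} [SeminormedAddCommGroup E] {h k : G → E} {C : ℝ}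
    (hk : k ∈ fnHull h) (hC : ∀ x, ‖h x‖ ≤ C) (x : G) : ‖k x‖ ≤ C :=
  fnHull_subset_of_isClosed (P := {f | ‖f x‖ ≤ C})
    (isClosed_le (continuous_apply x).norm continuous_const) (fun t => hC (x - t)) hk

theorem dist_le_of_mem_fnHull {E : Type*} [PseudoMetricSpace E] {h k : G → E} {W : Set G}
    {ε : ℝ} (hk : k ∈ fnHull h) (hW : ∀ a b, b - a ∈ W → dist (h a) (h b) ≤ ε)
    (a b : G) (hab : b - a ∈ W) : dist (k a) (k b) ≤ ε :=
  fnHull_subset_of_isClosed (P := {f | dist (f a) (f b) ≤ ε})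
    (isClosed_le ((continuous_apply a).dist (continuous_apply b)) continuous_const)
    (fun t => hW _ _ (by rwa [sub_sub_sub_cancel_right])) hk

end FnHull

section UniformFnHull

variable [UniformSpace G] [AddCommGroup G] [IsUniformAddGroup G]
  {E : Type*} [PseudoMetricSpace E]

theorem uniformContinuous_iff_dist_le_of_sub_mem {f : G → E} :
    UniformContinuous f ↔
      ∀ ε > 0, ∃ W ∈ 𝓝 (0 : G), ∀ a b, b - a ∈ W → dist (f a) (f b) ≤ ε :=
  (𝓝 (0 : G)).basis_sets.uniformity_of_nhds_zero.uniformContinuous_iff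
    Metric.uniformity_basis_dist_le

theorem uniformContinuous_of_mem_fnHull {h k : G → E} (hh : UniformContinuous h)
    (hk : k ∈ fnHull h) : UniformContinuous k :=
  uniformContinuous_iff_dist_le_of_sub_mem.mpr fun ε hε =>
    (uniformContinuous_iff_dist_le_of_sub_mem.mp hh ε hε).imp fun _ ⟨hW, hhW⟩ =>
      ⟨hW, dist_le_of_mem_fnHull hk hhW⟩

/-- Choose the translate close to `k` at the finitely many centres of a cover of `Q` by
small translates of a neighbourhood of `0`; off the centres use the common modulus of
continuity of `h` and `k`. -/
theorem exists_translate_dist_le_of_mem_fnHull {h k : G → E} (hh : UniformContinuous h)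
    (hk : k ∈ fnHull h) {Q : Set G} (hQ : IsCompact Q) {δ : ℝ} (hδ : 0 < δ) :
    ∃ t, ∀ q ∈ Q, dist (k q) (h (q - t)) ≤ δ := by
  obtain ⟨W, hW, hhW⟩ :=
    uniformContinuous_iff_dist_le_of_sub_mem.mp hh (δ / 3) (by positivity)
  have hkW := dist_le_of_mem_fnHull hk hhW
  obtain ⟨T, -, hQT⟩ := hQ.elim_nhds_subcover (fun q => {y | y - q ∈ W}) fun q _ =>
    (continuous_sub_right q).tendsto' q 0 (sub_self q) hW
  have hnear : ∀ᶠ f in 𝓝 k, ∀ i ∈ T, dist (k i) (f i) ≤ δ / 3 :=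
    (eventually_all_finset T).mpr fun i _ =>
      ((continuous_apply i).tendsto k).eventually
        (Metric.closedBall_mem_nhds (k i) (by positivity : (0 : ℝ) < δ / 3))
        |>.mono fun _ hf => by rwa [dist_comm]
  obtain ⟨_, ⟨t, rfl⟩, ht⟩ :=
    ((mem_closure_iff_frequently.mp hk).and_eventually hnear).exists
  refine ⟨t, fun q hq => ?_⟩
  obtain ⟨i, hi, hqi⟩ := Set.mem_iUnion₂.mp (hQT hq)
  calc dist (k q) (h (q - t))
      ≤ dist (k q) (k i) + dist (k i) (h (i - t)) + dist (h (i - t)) (h (q - t)) :=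
        dist_triangle4 _ _ _ _
    _ ≤ δ / 3 + δ / 3 + δ / 3 := by
        gcongr
        · exact dist_comm (k q) (k i) ▸ hkW i q hqi
        · exact ht i hi
        · exact hhW _ _ (by rwa [sub_sub_sub_cancel_right])
    _ = δ := by ring

end UniformFnHull

section Wap

variable [UniformSpace G] [AddCommGroup G] [IsUniformAddGroup G]

theorem toWeakSpace_mem_closure_orbit_of_mem_fnHull {hb : G →ᵇ ℂ}
    (hK : IsCompact (closure (toWeakSpace ℂ (G →ᵇ ℂ) ''
      {g : G →ᵇ ℂ | ∃ s : G, g = bcfTranslate hb s})))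
    {f : G →ᵇ ℂ} (hf : ⇑f ∈ fnHull ⇑hb) :
    toWeakSpace ℂ (G →ᵇ ℂ) f ∈ closure (toWeakSpace ℂ (G →ᵇ ℂ) ''
      {g : G →ᵇ ℂ | ∃ s : G, g = bcfTranslate hb s}) := by
  let ι : WeakSpace ℂ (G →ᵇ ℂ) → G → ℂ := fun w => (toWeakSpace ℂ (G →ᵇ ℂ)).symm w
  have hι : Continuous ι := continuous_pi fun x =>
    WeakBilin.eval_continuous _ (BoundedContinuousFunction.evalCLM ℂ x)
  obtain ⟨w, hw, hwf⟩ := fnHull_subset_of_isClosed (hK.image hι).isClosed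
    (fun t => ⟨_, subset_closure ⟨bcfTranslate hb t, ⟨t, rfl⟩, rfl⟩, rfl⟩) hf
  have : (toWeakSpace ℂ (G →ᵇ ℂ)).symm w = f := DFunLike.coe_injective hwf
  rwa [← this, LinearEquiv.apply_symm_apply]

theorem IsWapFn.of_mem_fnHull {h k : G → ℂ} (hh : IsWapFn h) (hk : k ∈ fnHull h) :
    IsWapFn k := by
  obtain ⟨hhuc, hb, hbh, hK⟩ := hh
  obtain rfl : ⇑hb = h := funext hbh
  have hkuc := uniformContinuous_of_mem_fnHull hhuc hk
  let kb : G →ᵇ ℂ := .ofNormedAddCommGroup k hkuc.continuous ‖hb‖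
    (norm_le_of_mem_fnHull hk hb.norm_coe_le_norm)
  refine ⟨hkuc, kb, fun _ => rfl,
    hK.of_isClosed_subset isClosed_closure (closure_minimal ?_ isClosed_closure)⟩
  rintro _ ⟨_, ⟨s, rfl⟩, rfl⟩
  exact toWeakSpace_mem_closure_orbit_of_mem_fnHull hK (sub_mem_fnHull hk s)

end Wap

theorem setIntegral_image_const_add [TopologicalSpace G] [AddCommGroup G]
    [IsTopologicalAddGroup G] [MeasurableSpace G] [BorelSpace G]
    {E : Type*} [NormedAddCommGroup E] [NormedSpace ℝ E] (θ : Measure G) [θ.IsAddLeftInvariant]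
    (x : G) (A : Set G) (g : G → E) :
    ∫ y in (fun s => x + s) '' A, g y ∂θ = ∫ s in A, g (x + s) ∂θ := by
  rw [← (measurePreserving_add_left θ x).setIntegral_preimage_emb
    (measurableEmbedding_addLeft x), Set.preimage_image_eq _ (add_right_injective x)]

theorem norm_smul_setIntegral_sub_le {X E : Type*} [MeasurableSpace X] [NormedAddCommGroup E]
    [NormedSpace ℝ E] {θ : Measure X} {A : Set X} {f g : X → E} {δ : ℝ} (hA : θ A < ⊤)
    (hf : IntegrableOn f A θ) (hg : IntegrableOn g A θ) (hδ : 0 ≤ δ)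
    (hfg : ∀ x ∈ A, ‖f x - g x‖ ≤ δ) :
    ‖(θ A).toReal⁻¹ • ∫ x in A, f x ∂θ - (θ A).toReal⁻¹ • ∫ x in A, g x ∂θ‖ ≤ δ := by
  rw [← smul_sub, ← integral_sub hf hg, norm_smul, norm_inv,
    Real.norm_of_nonneg ENNReal.toReal_nonneg]
  have hint : ‖∫ x in A, f x - g x ∂θ‖ ≤ δ * (θ A).toReal :=
    norm_setIntegral_le_of_norm_le_const hA hfg
  rcases ENNReal.toReal_nonneg.eq_or_lt with h0 | hpos
  · rwa [← h0, inv_zero, zero_mul]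
  · rw [inv_mul_le_iff₀ hpos]
    linarith

theorem IsMeanFn.of_mem_fnHull [UniformSpace G] [AddCommGroup G] [IsUniformAddGroup G]
    [MeasurableSpace G] [BorelSpace G] {θ : Measure G} [θ.IsAddHaarMeasure]
    {h k : G → ℂ} {m : ℂ} (hh : UniformContinuous h) (hk : k ∈ fnHull h)
    (hm : IsMeanFn θ h m) : IsMeanFn θ k m := by
  intro A hA
  rw [Metric.tendstoUniformly_iff]
  intro ε hε
  have hkc : Continuous k := (uniformContinuous_of_mem_fnHull hh hk).continuous
  filter_upwards [Metric.tendstoUniformly_iff.mp (hm A hA) (ε / 2) (by positivity)] with n hn x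
  have hAn : IsCompact (A n) := hA.1 n
  have hint : ∀ {g : G → ℂ}, Continuous g → IntegrableOn g (A n) θ := fun hg =>
    (hg.continuousOn.integrableOn_compact' hAn.closure isClosed_closure.measurableSet).mono_set
      subset_closure
  obtain ⟨t, ht⟩ := exists_translate_dist_le_of_mem_fnHull hh hk
    (hAn.image (continuous_const_add x)) (δ := ε / 4) (by positivity)
  have hclose : dist ((θ (A n)).toReal⁻¹ • ∫ y in (fun s => x - t + s) '' A n, h y ∂θ)
      ((θ (A n)).toReal⁻¹ • ∫ y in (fun s => x + s) '' A n, k y ∂θ) ≤ ε / 4 := by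
    rw [dist_comm, dist_eq_norm, setIntegral_image_const_add, setIntegral_image_const_add]
    refine norm_smul_setIntegral_sub_le hAn.measure_lt_top
      (hint (hkc.comp (continuous_const_add x)))
      (hint (hh.continuous.comp (continuous_const_add _)))
      (by positivity) fun s hs => ?_
    rw [← dist_eq_norm, ← add_sub_right_comm]
    exact ht (x + s) ⟨s, hs, rfl⟩
  linarith [hn (x - t), dist_triangle m
    ((θ (A n)).toReal⁻¹ • ∫ y in (fun s => x - t + s) '' A n, h y ∂θ)
    ((θ (A n)).toReal⁻¹ • ∫ y in (fun s => x + s) '' A n, k y ∂θ)]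

theorem convF_translateM [AddCommGroup G] (μ : MeasF G) (c : G → ℂ) (t x : G) :
    convF c (translateM t μ) x = convF c μ (x - t) :=
  congrArg μ (funext fun s => congrArg c (sub_add_eq_sub_sub x t s))

section Hull

variable [TopologicalSpace G] [AddCommGroup G] {μ ν : MeasF G}

/-- The vague topology `vagueTop` is induced by this map. -/
def restrictCc (ρ : MeasF G) : {c : G → ℂ // IsCc c} → ℂ :=
  fun c => ρ c.1

theorem restrictCc_mem_closure (hν : ν ∈ hullM μ) :
    restrictCc ν ∈ closure (Set.range fun t => restrictCc (translateM t μ)) :=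
  @map_mem_closure _ _ vagueTop _ _ _ _ _ continuous_induced_dom hν
    (by rintro _ ⟨t, rfl⟩; exact ⟨t, rfl⟩)

theorem restrictCc_mem_of_mem_hullM (hν : ν ∈ hullM μ)
    {S : Set ({c : G → ℂ // IsCc c} → ℂ)} (hS : IsClosed S)
    (hμS : ∀ t, restrictCc (translateM t μ) ∈ S) : restrictCc ν ∈ S :=
  closure_minimal (Set.range_subset_iff.mpr hμS) hS (restrictCc_mem_closure hν)

theorem convF_mem_fnHull [IsTopologicalAddGroup G] (hν : ν ∈ hullM μ) {c : G → ℂ}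
    (hc : IsCc c) : convF c ν ∈ fnHull (convF c μ) :=
  map_mem_closure (f := fun F x => F ⟨fun s => c (x - s), hc.comp_homeomorph (.subLeft x)⟩)
    (continuous_pi fun _ => continuous_apply _) (restrictCc_mem_closure hν)
    (by rintro _ ⟨t, rfl⟩; exact ⟨t, funext fun x => (convF_translateM μ c t x).symm⟩)

end Hull

theorem IsTbF.isRadonF_of_mem_hullM [UniformSpace G] [AddCommGroup G] [IsUniformAddGroup G]
    {μ ν : MeasF G} (hμ : IsTbF μ) (hν : ν ∈ hullM μ) : IsRadonF ν := by
  refine ⟨fun f g hf hg => ?_, fun a f hf => ?_, fun K hK => ?_⟩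
  · exact restrictCc_mem_of_mem_hullM hν
      (S := {F | F ⟨f + g, hf.add hg⟩ = F ⟨f, hf⟩ + F ⟨g, hg⟩})
      (isClosed_eq (continuous_apply _) (by fun_prop))
      fun t => (hμ.1.translateM t).1 f g hf hg
  · exact restrictCc_mem_of_mem_hullM hν
      (S := {F | F ⟨a • f, hf.const_smul a⟩ = a * F ⟨f, hf⟩})
      (isClosed_eq (continuous_apply _) (by fun_prop))
      fun t => (hμ.1.translateM t).2.1 a f hf
  · obtain ⟨C, hC⟩ := hμ.exists_bound_translateM hK
    refine ⟨C, fun f hf hfK => ?_⟩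
    have hfc : IsCc f := ⟨hf, hK.of_isClosed_subset (isClosed_tsupport f) hfK⟩
    exact restrictCc_mem_of_mem_hullM hν (S := {F | ‖F ⟨f, hfc⟩‖ ≤ C * ⨆ x, ‖f x‖})
      (isClosed_le (continuous_apply _).norm continuous_const) fun t => hC t f hf hfK

theorem hull_of_wap0_subset_wap0_general [UniformSpace G] [AddCommGroup G] [IsUniformAddGroup G]
    [MeasurableSpace G] [BorelSpace G]
    (θ : Measure G) [θ.IsAddHaarMeasure]
    (μ : MeasF G) (hμ : IsWap0M θ μ) :
    ∀ ν ∈ hullM μ, IsWap0M θ ν := by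
  intro ν hν
  obtain ⟨⟨hμtb, hμwap⟩, hμ0⟩ := hμ
  have hconv : ∀ c, IsCc c → convF c ν ∈ fnHull (convF c μ) := fun _ => convF_mem_fnHull hν
  refine ⟨⟨⟨hμtb.isRadonF_of_mem_hullM hν, fun c hc => ?_⟩,
    fun c hc => (hμwap c hc).of_mem_fnHull (hconv c hc)⟩, fun c hc => ?_⟩
  · obtain ⟨huc, C, hC⟩ := hμtb.2 c hc
    exact ⟨uniformContinuous_of_mem_fnHull huc (hconv c hc), C,
      norm_le_of_mem_fnHull (hconv c hc) hC⟩
  · have hnorm : UniformContinuous fun z : ℂ => (‖z‖ : ℂ) :=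
      Complex.isometry_ofReal.uniformContinuous.comp uniformContinuous_norm
    exact (hμ0 c hc).of_mem_fnHull (hnorm.comp (hμtb.2 c hc).1)
      (comp_mem_fnHull hnorm.continuous (hconv c hc))

/-- If `μ` is a null weakly almost periodic measure, then every element of
the hull `X(μ)` is a null weakly almost periodic measure. -/
theorem hull_of_wap0_subset_wap0 [UniformSpace G] [AddCommGroup G] [IsUniformAddGroup G]
    [LocallyCompactSpace G] [SigmaCompactSpace G] [MeasurableSpace G] [BorelSpace G]
    (θ : Measure G) [θ.IsAddHaarMeasure]
    (μ : MeasF G) (hμ : IsWap0M θ μ) :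
    ∀ ν ∈ hullM μ, IsWap0M θ ν :=
  hull_of_wap0_subset_wap0_general θ μ hμ
end
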